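/- arXiv:1207.6877 — 2 statements merged into one kernel-verified Lean document; each statement's English description precedes it below -/
import Mathlib

section
/- Suppose f : [a,b] → ℝ is a continuous left almost convex function with corresponding interior points c < d of [a,b], i.e., (i) the restriction of f to [c,b] is convex, and (ii) f ≥ h on [a,c], where h is the affine function joining the points (c, f(c)) and (d, f(d)). Let μ be a Steffensen-Popoviciu measure on [a,b] with barycenter b_μ = (1/μ([a,b])) ∫_a^b x dμ(x). If b_μ ≥ c and ∫_a^d ( (f(x) − f(c))(d − c) − (f(d) − f(c))(x − c) ) dμ(x) ≥ 0, then f(b_μ) ≤ (1/μ([a,b])) ∫_a^b f(x) dμ(x). -/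
/-!
Subtracting the chord through `(c, f c)` and `(d, f d)`, for which Jensen's inequality is an
equality, reduces the claim to a function `ψ` that is convex on `[c, b]` with `ψ c = ψ d = 0`.
Then `Ψ x = ψ (max x d)` is convex on `[a, b]`, dominates `ψ` on `[c, b]` (in particular at the
barycenter), and `∫ (ψ - Ψ) dμ = ∫_{[a, d]} ψ dμ ≥ 0` by the integral hypothesis, so it remains to apply
Jensen's inequality to `Ψ`. For a Steffensen–Popoviciu measure this holds because every affine
minorant `ℓ ≤ Ψ` leaves a nonnegative convex `Ψ - ℓ`, so `ℓ (b_μ) = ⨍ ℓ dμ ≤ ⨍ Ψ dμ`, and a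
continuous convex function on `[a, b]` is the supremum of its affine minorants at every point of
`(a, b]`: support lines at interior points, a limit of them at `b`.
-/

open MeasureTheory Set

lemma convexOn_const_add_mul {s : Set ℝ} (hs : Convex ℝ s) (q r : ℝ) :
    ConvexOn ℝ s (fun x => q + r * x) :=
  ⟨hs, fun x _ y _ α β _ _ hαβ => le_of_eq <| by
    simp only [smul_eq_mul]
    linear_combination q * hαβ.symm⟩

lemma concaveOn_const_add_mul {s : Set ℝ} (hs : Convex ℝ s) (q r : ℝ) :
    ConcaveOn ℝ s (fun x => q + r * x) :=
  ⟨hs, fun x _ y _ α β _ _ hαβ => le_of_eq <| by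
    simp only [smul_eq_mul]
    linear_combination (-q) * hαβ.symm⟩

namespace ConvexOn

variable {S : Set ℝ} {ψ : ℝ → ℝ} {a b c d p x y : ℝ}

lemma slope_le_rightDeriv_of_mem_interior (hψ : ConvexOn ℝ S ψ) (hx : x ∈ S)
    (hp : p ∈ interior S) (hxp : x < p) : slope ψ x p ≤ derivWithin ψ (Ioi p) p :=
  (hψ.slope_le_leftDeriv_of_mem_interior hx hp hxp).trans
    (hψ.leftDeriv_le_rightDeriv_of_mem_interior hp)

lemma add_rightDeriv_mul_sub_le (hψ : ConvexOn ℝ S ψ) (hp : p ∈ interior S) (hy : y ∈ S) :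
    ψ p + derivWithin ψ (Ioi p) p * (y - p) ≤ ψ y := by
  rcases lt_trichotomy y p with hyp | rfl | hpy
  · have h := hψ.slope_le_rightDeriv_of_mem_interior hy hp hyp
    rw [slope_def_field, div_le_iff₀ (sub_pos.2 hyp)] at h
    linarith
  · simp
  · have h := hψ.rightDeriv_le_slope_of_mem_interior hp hy hpy
    rw [slope_def_field, le_div_iff₀ (sub_pos.2 hpy)] at h
    linarith

lemma le_of_forall_affine_le {J : ℝ} (hψ : ConvexOn ℝ (Icc a b) ψ)
    (hψc : ContinuousOn ψ (Icc a b)) (hp : p ∈ Ioc a b)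
    (hJ : ∀ q r : ℝ, (∀ x ∈ Icc a b, q + r * x ≤ ψ x) → q + r * p ≤ J) : ψ p ≤ J := by
  -- the support lines at `t ∈ (a, p)` have slope at least `slope ψ a t`; let `t → p`
  have hlow : ∀ t ∈ Ioo a p, ψ t + slope ψ a t * (p - t) ≤ J := by
    intro t ht
    have ht_int : t ∈ interior (Icc a b) := by
      rw [interior_Icc]
      exact ⟨ht.1, ht.2.trans_le hp.2⟩
    have hsupp := hJ (ψ t - derivWithin ψ (Ioi t) t * t) (derivWithin ψ (Ioi t) t)
      fun x hx => by linarith [hψ.add_rightDeriv_mul_sub_le ht_int hx]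
    have hslope := hψ.slope_le_rightDeriv_of_mem_interior
      (left_mem_Icc.2 (hp.1.le.trans hp.2)) ht_int ht.1
    nlinarith [mul_le_mul_of_nonneg_right hslope (sub_nonneg.2 ht.2.le)]
  have hψp : ContinuousWithinAt ψ (Ioo a p) p :=
    (hψc p ⟨hp.1.le, hp.2⟩).mono (Ioo_subset_Icc_self.trans (Icc_subset_Icc_right hp.2))
  have hcont : ContinuousWithinAt (fun t => ψ t + slope ψ a t * (p - t)) (Ioo a p) p := by
    simp_rw [slope_def_field]
    exact hψp.add (((hψp.sub continuousWithinAt_const).div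
      (continuousWithinAt_id.sub continuousWithinAt_const) (sub_ne_zero.2 hp.1.ne')).mul
      (continuousWithinAt_const.sub continuousWithinAt_id))
  have hp_mem : p ∈ closure (Ioo a p) := by
    rw [closure_Ioo hp.1.ne]
    exact right_mem_Icc.2 hp.1.le
  simpa using hcont.closure_le hp_mem continuousWithinAt_const hlow

lemma le_of_left_le (hψ : ConvexOn ℝ S ψ) (hc : c ∈ S) (hy : y ∈ S) (hcx : c < x)
    (hxy : x < y) (h : ψ c ≤ ψ x) : ψ x ≤ ψ y := by
  nlinarith [hψ.secant_mono_aux1 hc hy hcx hxy]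

lemma monotoneOn_Icc_of_le (hψ : ConvexOn ℝ (Icc c b) ψ) (hcd : c < d) (hψcd : ψ c ≤ ψ d) :
    MonotoneOn ψ (Icc d b) := by
  intro x hx y hy hxy
  have hc : c ∈ Icc c b := left_mem_Icc.2 (hcd.le.trans (hx.1.trans hx.2))
  have hcx : ψ c ≤ ψ x := by
    rcases hx.1.eq_or_lt with rfl | hdx
    · exact hψcd
    · exact hψcd.trans (hψ.le_of_left_le hc ⟨hcd.le.trans hx.1, hx.2⟩ hcd hdx hψcd)
  rcases hxy.eq_or_lt with rfl | hxy
  · rfl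
  · exact hψ.le_of_left_le hc ⟨(hcd.le.trans hx.1).trans hxy.le, hy.2⟩
      (hcd.trans_le hx.1) hxy hcx

lemma comp_max (hψ : ConvexOn ℝ (Icc c b) ψ) (hcd : c < d) (hdb : d ≤ b)
    (hψcd : ψ c ≤ ψ d) : ConvexOn ℝ (Iic b) (fun x => ψ (max x d)) := by
  have himage : (fun x => max x d) '' Iic b = Icc d b := by
    ext y
    constructor
    · rintro ⟨x, hx, rfl⟩
      exact ⟨le_max_right x d, max_le hx hdb⟩
    · exact fun hy => ⟨y, hy.2, max_eq_left hy.1⟩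
  have hmax : ConvexOn ℝ (Iic b) (fun x => max x d) :=
    (convexOn_id (convex_Iic b)).sup (convexOn_const d (convex_Iic b))
  refine ConvexOn.comp ?_ hmax ?_
  · rw [himage]
    exact hψ.subset (Icc_subset_Icc_left hcd.le) (convex_Icc d b)
  · rw [himage]
    exact hψ.monotoneOn_Icc_of_le hcd hψcd

lemma le_comp_max (hψ : ConvexOn ℝ (Icc c b) ψ) (hcd : c ≤ d) (hdb : d ≤ b)
    (hψcd : ψ c ≤ ψ d) (hx : x ∈ Icc c b) : ψ x ≤ ψ (max x d) := by
  rcases le_total x d with hxd | hdx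
  · rw [max_eq_right hxd]
    have h := hψ.le_on_segment (left_mem_Icc.2 (hcd.trans hdb)) ⟨hcd, hdb⟩
      (by rw [segment_eq_Icc hcd]; exact ⟨hx.1, hxd⟩)
    rwa [max_eq_right hψcd] at h
  · rw [max_eq_left hdx]

end ConvexOn

section SignedIntegral

variable {s t : Set ℝ} {μ₁ μ₂ : Measure ℝ} {g h : ℝ → ℝ}

/-- The integral over `s` against the signed measure `μ₁ - μ₂` (signed measures are encoded as
differences of finite measures). -/
noncomputable def signedSetIntegral (s : Set ℝ) (μ₁ μ₂ : Measure ℝ) (g : ℝ → ℝ) : ℝ :=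
  (∫ x in s, g x ∂μ₁) - ∫ x in s, g x ∂μ₂

noncomputable def signedMass (s : Set ℝ) (μ₁ μ₂ : Measure ℝ) : ℝ :=
  (μ₁ s).toReal - (μ₂ s).toReal

noncomputable def signedBarycenter (s : Set ℝ) (μ₁ μ₂ : Measure ℝ) : ℝ :=
  (signedMass s μ₁ μ₂)⁻¹ * signedSetIntegral s μ₁ μ₂ (fun x => x)

def IsSteffensenPopoviciu (s : Set ℝ) (μ₁ μ₂ : Measure ℝ) : Prop :=
  0 < signedMass s μ₁ μ₂ ∧ ∀ g : ℝ → ℝ, ContinuousOn g s → ConvexOn ℝ s g →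
    (∀ x ∈ s, 0 ≤ g x) → 0 ≤ signedSetIntegral s μ₁ μ₂ g

lemma signedSetIntegral_const_mul (r : ℝ) :
    signedSetIntegral s μ₁ μ₂ (fun x => r * g x) = r * signedSetIntegral s μ₁ μ₂ g := by
  simp only [signedSetIntegral, integral_const_mul, mul_sub]

lemma signedSetIntegral_const (q : ℝ) :
    signedSetIntegral s μ₁ μ₂ (fun _ => q) = q * signedMass s μ₁ μ₂ := by
  simp only [signedSetIntegral, signedMass, setIntegral_const, smul_eq_mul, measureReal_def]
  ring

lemma signedSetIntegral_indicator (ht : MeasurableSet t) :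
    signedSetIntegral s μ₁ μ₂ (t.indicator g) = signedSetIntegral (s ∩ t) μ₁ μ₂ g := by
  simp only [signedSetIntegral, setIntegral_indicator ht]

lemma signedSetIntegral_sub_comp_max {a b d : ℝ} (hdb : d ≤ b) (hgd : g d = 0) :
    signedSetIntegral (Icc a b) μ₁ μ₂ (fun x => g x - g (max x d))
      = signedSetIntegral (Icc a d) μ₁ μ₂ g := by
  have hind : (fun x => g x - g (max x d)) = (Iic d).indicator g := by
    ext x
    by_cases hxd : x ≤ d
    · simp [hxd, hgd]
    · simp [hxd, max_eq_left (not_le.1 hxd).le]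
  rw [hind, signedSetIntegral_indicator measurableSet_Iic, ← Ici_inter_Iic, inter_assoc,
    Iic_inter_Iic, inf_eq_right.2 hdb, Ici_inter_Iic]

variable [IsFiniteMeasure μ₁] [IsFiniteMeasure μ₂]

lemma signedSetIntegral_sub (hs : IsCompact s) (hg : ContinuousOn g s) (hh : ContinuousOn h s) :
    signedSetIntegral s μ₁ μ₂ (fun x => g x - h x)
      = signedSetIntegral s μ₁ μ₂ g - signedSetIntegral s μ₁ μ₂ h := by
  simp only [signedSetIntegral]
  rw [integral_sub (hg.integrableOn_compact hs) (hh.integrableOn_compact hs),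
    integral_sub (hg.integrableOn_compact hs) (hh.integrableOn_compact hs)]
  ring

lemma signedSetIntegral_affine (hs : IsCompact s) (q r : ℝ) :
    signedSetIntegral s μ₁ μ₂ (fun x => q + r * x)
      = q * signedMass s μ₁ μ₂ + r * signedSetIntegral s μ₁ μ₂ (fun x => x) := by
  have hid : ∀ μ : Measure ℝ, [IsFiniteMeasure μ] → IntegrableOn (fun x : ℝ => x) s μ :=
    fun _ _ => continuousOn_id.integrableOn_compact hs
  simp only [signedSetIntegral, signedMass]
  rw [integral_add (integrable_const q) ((hid μ₁).const_mul r),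
    integral_add (integrable_const q) ((hid μ₂).const_mul r), integral_const_mul,
    integral_const_mul]
  simp only [setIntegral_const, smul_eq_mul, measureReal_def]
  ring

lemma affine_signedBarycenter (hs : IsCompact s) (hm : signedMass s μ₁ μ₂ ≠ 0) (q r : ℝ) :
    q + r * signedBarycenter s μ₁ μ₂
      = (signedMass s μ₁ μ₂)⁻¹ * signedSetIntegral s μ₁ μ₂ (fun x => q + r * x) := by
  rw [signedSetIntegral_affine hs, signedBarycenter]
  field_simp

namespace IsSteffensenPopoviciu

variable {φ : ℝ → ℝ}

lemma signedSetIntegral_le (hSP : IsSteffensenPopoviciu s μ₁ μ₂) (hs : IsCompact s)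
    (hg : ContinuousOn g s) (hφ : ContinuousOn φ s) (hconv : ConvexOn ℝ s (fun x => φ x - g x))
    (hle : ∀ x ∈ s, g x ≤ φ x) : signedSetIntegral s μ₁ μ₂ g ≤ signedSetIntegral s μ₁ μ₂ φ := by
  have h := hSP.2 (fun x => φ x - g x) (hφ.sub hg) hconv fun x hx => sub_nonneg.2 (hle x hx)
  rw [signedSetIntegral_sub hs hφ hg] at h
  linarith

lemma affine_signedBarycenter_le (hSP : IsSteffensenPopoviciu s μ₁ μ₂) (hs : IsCompact s)
    (hφc : ContinuousOn φ s) (hφ : ConvexOn ℝ s φ) {q r : ℝ} (hℓ : ∀ x ∈ s, q + r * x ≤ φ x) :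
    q + r * signedBarycenter s μ₁ μ₂
      ≤ (signedMass s μ₁ μ₂)⁻¹ * signedSetIntegral s μ₁ μ₂ φ := by
  rw [affine_signedBarycenter hs hSP.1.ne']
  exact mul_le_mul_of_nonneg_left (hSP.signedSetIntegral_le hs (by fun_prop) hφc
    (hφ.sub (concaveOn_const_add_mul hφ.1 q r)) hℓ) (inv_nonneg.2 hSP.1.le)

lemma signedBarycenter_le {a b : ℝ} (hSP : IsSteffensenPopoviciu (Icc a b) μ₁ μ₂) :
    signedBarycenter (Icc a b) μ₁ μ₂ ≤ b := by
  have h := hSP.affine_signedBarycenter_le (q := 0) (r := 1) isCompact_Icc continuousOn_const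
    (convexOn_const b (convex_Icc a b)) fun x hx => by simpa using hx.2
  rwa [signedSetIntegral_const, zero_add, one_mul, mul_comm b,
    inv_mul_cancel_left₀ hSP.1.ne'] at h

lemma map_signedBarycenter_le {a b : ℝ} (hSP : IsSteffensenPopoviciu (Icc a b) μ₁ μ₂)
    (hφc : ContinuousOn φ (Icc a b)) (hφ : ConvexOn ℝ (Icc a b) φ)
    (ha : a < signedBarycenter (Icc a b) μ₁ μ₂) :
    φ (signedBarycenter (Icc a b) μ₁ μ₂)
      ≤ (signedMass (Icc a b) μ₁ μ₂)⁻¹ * signedSetIntegral (Icc a b) μ₁ μ₂ φ :=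
  hφ.le_of_forall_affine_le hφc ⟨ha, hSP.signedBarycenter_le⟩
    fun _ _ hℓ => hSP.affine_signedBarycenter_le isCompact_Icc hφc hφ hℓ

lemma map_signedBarycenter_le_of_chord_eq_zero {a b c d : ℝ}
    (hSP : IsSteffensenPopoviciu (Icc a b) μ₁ μ₂) (hac : a < c) (hcd : c < d) (hdb : d ≤ b)
    (hφc : ContinuousOn φ (Icc a b)) (hφ : ConvexOn ℝ (Icc c b) φ) (hφc0 : φ c = 0)
    (hφd0 : φ d = 0) (hc : c ≤ signedBarycenter (Icc a b) μ₁ μ₂)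
    (hleft : 0 ≤ signedSetIntegral (Icc a d) μ₁ μ₂ φ) :
    φ (signedBarycenter (Icc a b) μ₁ μ₂)
      ≤ (signedMass (Icc a b) μ₁ μ₂)⁻¹ * signedSetIntegral (Icc a b) μ₁ μ₂ φ := by
  have hcd0 : φ c ≤ φ d := (hφc0.trans hφd0.symm).le
  have hΦ : ConvexOn ℝ (Icc a b) (fun x => φ (max x d)) :=
    (hφ.comp_max hcd hdb hcd0).subset Icc_subset_Iic_self (convex_Icc a b)
  have hΦc : ContinuousOn (fun x => φ (max x d)) (Icc a b) :=
    hφc.comp (by fun_prop)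
      fun x hx => ⟨hac.le.trans (hcd.le.trans (le_max_right x d)), max_le hx.2 hdb⟩
  have hΦ_le : signedSetIntegral (Icc a b) μ₁ μ₂ (fun x => φ (max x d))
      ≤ signedSetIntegral (Icc a b) μ₁ μ₂ φ := by
    have h := signedSetIntegral_sub_comp_max (a := a) (μ₁ := μ₁) (μ₂ := μ₂) hdb hφd0
    rw [signedSetIntegral_sub isCompact_Icc hφc hΦc] at h
    linarith
  calc φ (signedBarycenter (Icc a b) μ₁ μ₂)
      ≤ φ (max (signedBarycenter (Icc a b) μ₁ μ₂) d) :=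
        hφ.le_comp_max hcd.le hdb hcd0 ⟨hc, hSP.signedBarycenter_le⟩
    _ ≤ (signedMass (Icc a b) μ₁ μ₂)⁻¹ *
          signedSetIntegral (Icc a b) μ₁ μ₂ (fun x => φ (max x d)) :=
        hSP.map_signedBarycenter_le hΦc hΦ (hac.trans_le hc)
    _ ≤ _ := mul_le_mul_of_nonneg_left hΦ_le (inv_nonneg.2 hSP.1.le)

end IsSteffensenPopoviciu

end SignedIntegral

theorem jensen_left_almost_convex_general
    (a b c d : ℝ) (hac : a < c) (hcd : c < d) (hdb : d < b)
    (f : ℝ → ℝ) (hf_cont : ContinuousOn f (Set.Icc a b))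
    (hf_conv : ConvexOn ℝ (Set.Icc c b) f)
    (μ₁ μ₂ : Measure ℝ) [IsFiniteMeasure μ₁] [IsFiniteMeasure μ₂]
    (m : ℝ) (hm_def : m = (μ₁ (Set.Icc a b)).toReal - (μ₂ (Set.Icc a b)).toReal)
    (hm_pos : 0 < m)
    (hSP : ∀ g : ℝ → ℝ, ContinuousOn g (Set.Icc a b) →
      ConvexOn ℝ (Set.Icc a b) g → (∀ x ∈ Set.Icc a b, 0 ≤ g x) →
      0 ≤ (∫ x in Set.Icc a b, g x ∂μ₁) - ∫ x in Set.Icc a b, g x ∂μ₂)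
    (bμ : ℝ)
    (hbμ_def : bμ = m⁻¹ * ((∫ x in Set.Icc a b, x ∂μ₁) - ∫ x in Set.Icc a b, x ∂μ₂))
    (hbμ_ge : c ≤ bμ)
    (hii : 0 ≤ (∫ x in Set.Icc a d,
          ((f x - f c) * (d - c) - (f d - f c) * (x - c)) ∂μ₁) -
        ∫ x in Set.Icc a d, ((f x - f c) * (d - c) - (f d - f c) * (x - c)) ∂μ₂) :
    f bμ ≤ m⁻¹ * ((∫ x in Set.Icc a b, f x ∂μ₁) - ∫ x in Set.Icc a b, f x ∂μ₂) := by
  have hm : m = signedMass (Icc a b) μ₁ μ₂ := hm_def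
  have hbμ : bμ = signedBarycenter (Icc a b) μ₁ μ₂ := by rw [hbμ_def, hm]; rfl
  have hμ : IsSteffensenPopoviciu (Icc a b) μ₁ μ₂ := ⟨hm ▸ hm_pos, hSP⟩
  rw [hm]
  change f bμ ≤ (signedMass (Icc a b) μ₁ μ₂)⁻¹ * signedSetIntegral (Icc a b) μ₁ μ₂ f
  -- `q + slope f c d * x` is the chord through `(c, f c)` and `(d, f d)`
  set q := f c - slope f c d * c
  set ψ : ℝ → ℝ := fun x => f x - (q + slope f c d * x)
  have hψc : ψ c = 0 := by simp only [ψ, q]; ring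
  have hψ_integrand : ∀ x, (f x - f c) * (d - c) - (f d - f c) * (x - c) = (d - c) * ψ x := by
    intro x
    simp only [ψ, q, slope_def_field]
    field_simp [sub_ne_zero.2 hcd.ne']
    ring
  have hψd : ψ d = 0 := by
    simpa [(sub_pos.2 hcd).ne'] using hψ_integrand d
  have hψ_left : 0 ≤ signedSetIntegral (Icc a d) μ₁ μ₂ ψ := by
    have h : 0 ≤ signedSetIntegral (Icc a d) μ₁ μ₂
        (fun x => (f x - f c) * (d - c) - (f d - f c) * (x - c)) := hii
    simp only [hψ_integrand, signedSetIntegral_const_mul] at h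
    exact (mul_nonneg_iff_of_pos_left (sub_pos.2 hcd)).1 h
  have hψ := hμ.map_signedBarycenter_le_of_chord_eq_zero (φ := ψ) hac hcd hdb.le
    (hf_cont.sub (by fun_prop)) (hf_conv.sub (concaveOn_const_add_mul (convex_Icc c b) _ _))
    hψc hψd (hbμ ▸ hbμ_ge) hψ_left
  have hℓ := affine_signedBarycenter (μ₁ := μ₁) (μ₂ := μ₂) isCompact_Icc hμ.1.ne' q (slope f c d)
  rw [← hbμ] at hℓ
  rw [← hbμ, signedSetIntegral_sub isCompact_Icc hf_cont (by fun_prop)] at hψ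
  calc f bμ = (q + slope f c d * bμ) + ψ bμ := by ring
    _ ≤ _ := by linarith

/-- Theorem 3: Jensen-type inequality for a continuous left almost convex function
`f` on `[a, b]` (convex on `[c, b]` and above the chord through `(c, f c)` and
`(d, f d)` on `[a, c]`) with respect to a Steffensen–Popoviciu measure
`μ = μ₁ − μ₂` whose barycenter `b_μ` satisfies `b_μ ≥ c`, under the extra
integral condition (ii). The signed measure is represented as the difference of
two finite Borel measures carried by `[a, b]`. -/
theorem jensen_left_almost_convex
    (a b c d : ℝ) (hac : a < c) (hcd : c < d) (hdb : d < b)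
    (f : ℝ → ℝ) (hf_cont : ContinuousOn f (Set.Icc a b))
    (hf_conv : ConvexOn ℝ (Set.Icc c b) f)
    (h : ℝ → ℝ)
    (hh : h = fun x => f c + (f d - f c) / (d - c) * (x - c))
    (hf_above : ∀ x ∈ Set.Icc a c, h x ≤ f x)
    (μ₁ μ₂ : Measure ℝ) [IsFiniteMeasure μ₁] [IsFiniteMeasure μ₂]
    (hμ₁ : μ₁ (Set.Icc a b)ᶜ = 0) (hμ₂ : μ₂ (Set.Icc a b)ᶜ = 0)
    (m : ℝ) (hm_def : m = (μ₁ (Set.Icc a b)).toReal - (μ₂ (Set.Icc a b)).toReal)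
    (hm_pos : 0 < m)
    (hSP : ∀ g : ℝ → ℝ, ContinuousOn g (Set.Icc a b) →
      ConvexOn ℝ (Set.Icc a b) g → (∀ x ∈ Set.Icc a b, 0 ≤ g x) →
      0 ≤ (∫ x in Set.Icc a b, g x ∂μ₁) - ∫ x in Set.Icc a b, g x ∂μ₂)
    (bμ : ℝ)
    (hbμ_def : bμ = m⁻¹ * ((∫ x in Set.Icc a b, x ∂μ₁) - ∫ x in Set.Icc a b, x ∂μ₂))
    (hbμ_ge : c ≤ bμ)
    (hii : 0 ≤ (∫ x in Set.Icc a d,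
          ((f x - f c) * (d - c) - (f d - f c) * (x - c)) ∂μ₁) -
        ∫ x in Set.Icc a d, ((f x - f c) * (d - c) - (f d - f c) * (x - c)) ∂μ₂) :
    f bμ ≤ m⁻¹ * ((∫ x in Set.Icc a b, f x ∂μ₁) - ∫ x in Set.Icc a b, f x ∂μ₂) :=
  jensen_left_almost_convex_general a b c d hac hcd hdb f hf_cont hf_conv μ₁ μ₂ m hm_def hm_pos hSP
    bμ hbμ_def hbμ_ge hii
end

section
/- Let Ω be the set of triplets (x, y, z) with x ≤ y ≤ z in [−π/3, π/3) such that 2x − y + 3z ≥ 0 and (π/(3√3)) (2 tan x − tan y + 3 tan z) ≥ 2x − y + 3z. Then the maximum over Ω of tan((2x − y + 3z)/4) − (2 tan x − tan y + 3 tan z)/4 equals 0; in particular the expression is ≤ 0 on Ω and equals 0 at (x, y, z) = (0, 0, 0) ∈ Ω. -/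
open Real

/-!
On `[0, π/3]` the convex function `tan` lies below its chord through `(0, 0)` and
`(π/3, √3)`, i.e. `tan t ≤ (3√3/π) t`. Since `x ≤ y ≤ z < π/3`, the weighted mean
`t = (2x − y + 3z)/4` lies in `[0, π/3)`, and the second constraint on `Ω` says exactly that
`(3√3/π) t ≤ (2 tan x − tan y + 3 tan z)/4`.
-/

lemma ConvexOn.le_div_mul_of_map_zero {𝕜 : Type*}
    [Field 𝕜] [LinearOrder 𝕜] [IsStrictOrderedRing 𝕜]
    {s : Set 𝕜} {f : 𝕜 → 𝕜} (hf : ConvexOn 𝕜 s f) (h0 : 0 ∈ s) {a t : 𝕜} (ha : a ∈ s)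
    (hf0 : f 0 = 0) (ht : 0 ≤ t) (hta : t ≤ a) : f t ≤ t / a * f a := by
  rcases (ht.trans hta).eq_or_lt with rfl | ha0
  · rw [le_antisymm hta ht, hf0, zero_div, zero_mul]
  have hw : t / a ≤ 1 := div_le_one_of_le₀ hta ha0.le
  have := hf.2 h0 ha (sub_nonneg.2 hw) (div_nonneg ht ha0.le) (sub_add_cancel _ _)
  simpa [hf0, div_mul_cancel₀ t ha0.ne'] using this

lemma convexOn_tan : ConvexOn ℝ (Set.Ico 0 (π / 2)) tan := by
  have hcos : ∀ x ∈ Set.Ico 0 (π / 2), 0 < cos x := fun x hx =>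
    cos_pos_of_mem_Ioo ⟨by linarith [pi_pos, hx.1], hx.2⟩
  refine MonotoneOn.convexOn_of_deriv (convex_Ico _ _)
    (continuousOn_tan.mono fun x hx => (hcos x hx).ne') ?_ ?_ <;> rw [interior_Ico]
  · exact fun x hx =>
      (hasDerivAt_tan (hcos x (Set.Ioo_subset_Ico_self hx)).ne').differentiableAt.differentiableWithinAt
  · intro x hx y hy hxy
    have hcy := hcos y (Set.Ioo_subset_Ico_self hy)
    have hcos_le : cos y ≤ cos x :=
      cos_le_cos_of_nonneg_of_le_pi hx.1.le (by linarith [hy.2, pi_pos]) hxy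
    rw [deriv_tan, deriv_tan]
    gcongr

lemma tan_le_mul_self_of_le_pi_div_three {t : ℝ} (ht : 0 ≤ t) (htπ : t ≤ π / 3) :
    tan t ≤ 3 * √3 / π * t := by
  have hπ := pi_pos
  calc tan t ≤ t / (π / 3) * tan (π / 3) :=
        convexOn_tan.le_div_mul_of_map_zero ⟨le_rfl, by positivity⟩ ⟨by positivity, by linarith⟩
          tan_zero ht htπ
    _ = 3 * √3 / π * t := by rw [tan_pi_div_three]; ring

/-- The constrained optimization problem illustrating Theorem 3: the maximum of
`tan((2x − y + 3z)/4) − (2 tan x − tan y + 3 tan z)/4` over the set `Ω` of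
triplets `x ≤ y ≤ z` in `[−π/3, π/3)` with `2x − y + 3z ≥ 0` and
`(π/(3√3))(2 tan x − tan y + 3 tan z) ≥ 2x − y + 3z` equals `0` (attained
at `(0, 0, 0) ∈ Ω`). -/
theorem tan_weighted_jensen_max :
    IsGreatest
      {v : ℝ | ∃ x y z : ℝ, x ≤ y ∧ y ≤ z ∧
        x ∈ Set.Ico (-(π / 3)) (π / 3) ∧
        y ∈ Set.Ico (-(π / 3)) (π / 3) ∧
        z ∈ Set.Ico (-(π / 3)) (π / 3) ∧
        0 ≤ 2 * x - y + 3 * z ∧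
        2 * x - y + 3 * z ≤
          π / (3 * Real.sqrt 3) * (2 * tan x - tan y + 3 * tan z) ∧
        v = tan ((2 * x - y + 3 * z) / 4) -
          (2 * tan x - tan y + 3 * tan z) / 4}
      0 := by
  have hπ := pi_pos
  have hπ3 : -(π / 3) ≤ 0 ∧ 0 < π / 3 := ⟨by linarith, by positivity⟩
  refine ⟨⟨0, 0, 0, le_rfl, le_rfl, hπ3, hπ3, hπ3, by norm_num, by simp, by simp⟩, ?_⟩
  rintro _ ⟨x, y, z, hxy, hyz, -, -, hz, hs, hsT, rfl⟩
  set s := 2 * x - y + 3 * z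
  set T := 2 * tan x - tan y + 3 * tan z
  have hchord := tan_le_mul_self_of_le_pi_div_three (div_nonneg hs zero_le_four)
    (by linarith [hz.2] : s / 4 ≤ π / 3)
  have hT : 3 * √3 / π * s ≤ T := by
    rwa [mul_comm, ← le_div_iff₀ (by positivity), div_div_eq_mul_div, mul_comm T,
      mul_div_right_comm]
  linarith
end
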